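/- arXiv:1101.3793 — 7 statements merged into one kernel-verified Lean document; each statement's English description precedes it below -/
import Mathlib

section
/- Let F be a field, let u ∈ F[X] be any polynomial, and set a₀ = u(1) ∈ F. Define the 2×2 matrices over F[X]: C = [[1 − a₀ + u, a₀ − u], [−a₀ + u, 1 + a₀ − u]] and C′ = [[1 + a₀ − u, −a₀ + u], [a₀ − u, 1 − a₀ + u]] (constants regarded as constant polynomials). Then C·C′ = I₂, the entrywise evaluation of C at X = 1 equals I₂, and det(C) = 1. -/
open Polynomial

/-- The general family of Example 2.1: for any `u ∈ F[X]` with `a₀ = u(1)`, the matrix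
`C = [[1 − a₀ + u, a₀ − u], [−a₀ + u, 1 + a₀ − u]]` together with
`C′ = [[1 + a₀ − u, −a₀ + u], [a₀ − u, 1 − a₀ + u]]` satisfies `C·C′ = I₂`,
`C(1) = I₂`, and `det C = 1`. -/
theorem example21_pseudoidentity {F : Type*} [Field F] (u : F[X]) :
    let a₀ : F[X] := Polynomial.C (u.eval 1)
    let Cm : Matrix (Fin 2) (Fin 2) F[X] :=
      !![1 - a₀ + u, a₀ - u; -a₀ + u, 1 + a₀ - u]
    let Cm' : Matrix (Fin 2) (Fin 2) F[X] :=
      !![1 + a₀ - u, -a₀ + u; a₀ - u, 1 - a₀ + u]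
    Cm * Cm' = 1 ∧ Cm.map (Polynomial.eval (1 : F)) = 1 ∧ Cm.det = 1 := by
  intro a₀ Cm Cm'
  refine ⟨?_, ?_, ?_⟩
  · show (!![1 - a₀ + u, a₀ - u; -a₀ + u, 1 + a₀ - u] : Matrix (Fin 2) (Fin 2) F[X]) *
      !![1 + a₀ - u, -a₀ + u; a₀ - u, 1 - a₀ + u] = 1
    rw [show (1 : Matrix (Fin 2) (Fin 2) F[X]) = !![1,0;0,1] by
      ext i j; fin_cases i <;> fin_cases j <;> simp]
    rw [Matrix.mul_fin_two]
    congr 1 <;> ring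
  · ext i j
    fin_cases i <;> fin_cases j <;>
      simp [Cm, Matrix.one_apply, a₀]
  · show (!![1 - a₀ + u, a₀ - u; -a₀ + u, 1 + a₀ - u] : Matrix (Fin 2) (Fin 2) F[X]).det = 1
    rw [Matrix.det_fin_two_of]
    ring
end

section
/- Let F be a field, let u ∈ F[X] be any polynomial, set a₀ = u(1) ∈ F, and let C = [[1 − a₀ + u, a₀ − u], [−a₀ + u, 1 + a₀ − u]] be the 2×2 matrix over F[X] of Example 2.1. Then for every integer j ≥ 1, the 2×2 matrix over F whose entries are the coefficients of X^j in the corresponding entries of C equals (coeff of X^j in u)·[[1, −1], [1, −1]]; in particular its determinant is 0, so it is not invertible. -/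
open Polynomial

/-- In the family of Example 2.1, for every `j ≥ 1` the `j`-th coefficient matrix of `C`
equals `(coeff of X^j in u) • [[1, −1], [1, −1]]`; in particular its determinant is `0`
and it is not invertible. -/
theorem example21_coeff_matrix_singular {F : Type*} [Field F] (u : F[X]) :
    let a₀ : F[X] := Polynomial.C (u.eval 1)
    let Cm : Matrix (Fin 2) (Fin 2) F[X] :=
      !![1 - a₀ + u, a₀ - u; -a₀ + u, 1 + a₀ - u]
    ∀ j : ℕ, 1 ≤ j →
      Cm.map (fun p => p.coeff j) = u.coeff j • !![(1 : F), -1; 1, -1] ∧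
      (Cm.map (fun p => p.coeff j)).det = 0 ∧
      ¬ IsUnit (Cm.map (fun p => p.coeff j)) := by
  intro a₀ Cm j hj
  have hj' : j ≠ 0 := by omega
  have hmap : Cm.map (fun p => p.coeff j) = u.coeff j • !![(1 : F), -1; 1, -1] := by
    ext i k
    fin_cases i <;> fin_cases k <;>
      simp [Cm, a₀, Matrix.smul_apply, coeff_one, hj', coeff_C, mul_comm,
        mul_neg, Polynomial.coeff_sub, Polynomial.coeff_add]
  refine ⟨hmap, ?_, ?_⟩
  · rw [hmap]
    simp [Matrix.det_fin_two, Matrix.smul_apply]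
  · intro h
    have := (Matrix.isUnit_iff_isUnit_det _).mp h
    rw [hmap] at this
    simp [Matrix.det_fin_two, Matrix.smul_apply] at this
end

section
/- Over ℚ, define the 2×2 matrices with polynomial entries C = [[−1 + X + X², 2 − X − X²], [−2 + X + X², 3 − X − X²]] and E = [[3 − X − X², −2 + X + X²], [2 − X − X², −1 + X + X²]]. Then: (i) C·E = I₂; (ii) the entrywise evaluations of C and of E at X = 1 both equal I₂; and (iii) the matrix of coefficients of X¹ in C equals [[1, −1], [1, −1]], whose determinant is 0, hence it is not invertible. -/
open Polynomial

/-- The concrete counterexample (2.14)–(2.15) to Conjecture 1 of Resnikoff–Tian–Wells: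
`(C, E)` corresponds to a pseudoidentity matrix pair of rank 2, yet the coefficient
matrix of `X¹` in `C` is singular. -/
theorem counterexample_conjecture1 :
    let Cm : Matrix (Fin 2) (Fin 2) ℚ[X] :=
      !![-1 + X + X ^ 2, 2 - X - X ^ 2; -2 + X + X ^ 2, 3 - X - X ^ 2]
    let Em : Matrix (Fin 2) (Fin 2) ℚ[X] :=
      !![3 - X - X ^ 2, -2 + X + X ^ 2; 2 - X - X ^ 2, -1 + X + X ^ 2]
    Cm * Em = 1 ∧
    Cm.map (Polynomial.eval (1 : ℚ)) = 1 ∧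
    Em.map (Polynomial.eval (1 : ℚ)) = 1 ∧
    Cm.map (fun p => p.coeff 1) = !![(1 : ℚ), -1; 1, -1] ∧
    (Cm.map (fun p => p.coeff 1)).det = 0 ∧
    ¬ IsUnit (Cm.map (fun p => p.coeff 1)) := by
  intro Cm Em
  have hcoeff : Cm.map (fun p => p.coeff 1) = !![(1 : ℚ), -1; 1, -1] := by
    simp only [Cm, Matrix.map_apply]
    ext i j
    fin_cases i <;> fin_cases j <;> simp [Matrix.map_apply, coeff_one] <;> norm_num
  have hdet : (Cm.map (fun p => p.coeff 1)).det = 0 := by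
    rw [hcoeff]; simp [Matrix.det_fin_two]
  refine ⟨?_, ?_, ?_, hcoeff, hdet, ?_⟩
  · refine Matrix.ext fun i j => ?_
    fin_cases i <;> fin_cases j <;>
      simp [Cm, Em, Matrix.mul_apply, Fin.sum_univ_two, Matrix.one_apply] <;> ring
  · ext i j
    fin_cases i <;> fin_cases j <;>
      simp [Cm, Matrix.map_apply, Matrix.one_apply] <;> norm_num
  · ext i j
    fin_cases i <;> fin_cases j <;>
      simp [Em, Matrix.map_apply, Matrix.one_apply] <;> norm_num
  · intro h
    have := Matrix.isUnit_iff_isUnit_det _ |>.mp h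
    rw [hdet] at this
    exact this.ne_zero rfl
end

section
/- Let F be a field and m ≥ 2. Suppose C is an m×m matrix over F[X] such that (i) there exists an m×m matrix E over F[X] with C·E = I_m, and (ii) the entrywise evaluation of C at X = 1 equals I_m. Then there exist r ∈ ℕ, m×m matrices N_1, …, N_r over F with N_i² = 0 for each i, and positive integers k_1, …, k_r, such that C = (I_m − N̂_r + N̂_r·X^{k_r}) ⋯ (I_m − N̂_2 + N̂_2·X^{k_2})·(I_m − N̂_1 + N̂_1·X^{k_1}) and E = (I_m + N̂_1 − N̂_1·X^{k_1})·(I_m + N̂_2 − N̂_2·X^{k_2}) ⋯ (I_m + N̂_r − N̂_r·X^{k_r}). -/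
open Polynomial

/-
Every invertible matrix over `F[X]` is a product of transvections `1 + f E_ij` and constant
invertible matrices: if the total row degree of `A` is positive, the top coefficient of the
constant `det A` is the determinant of the matrix of leading row coefficients, so that matrix is
singular, and a vector in its left kernel gives a row operation lowering the total row degree.
A transvection factors as `(1 + (f - f(1)) E_ij) (1 + f(1) E_ij)`; writing
`f - f(1) = ∑ c_k (X^k - 1)` turns the first factor into a product of primitive factors
`1 + (X^k - 1) N` with `N² = 0`, and conjugating a primitive factor by a constant invertible
matrix gives a primitive factor again. Hence `C = G P` with `G` a product of primitive factors
and `P` constant, and evaluating at `X = 1` gives `P = 1`. Finally `E = C⁻¹` is the product of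
the inverses `1 - (X^k - 1) N` in the opposite order.
-/

theorem one_add_smul_mul_one_add_smul {S A : Type*} [CommRing S] [Ring A] [Algebra S A] {M : A}
    (hM : M * M = 0) (a b : S) : (1 + a • M) * (1 + b • M) = 1 + (a + b) • M := by
  rw [mul_add, add_mul, add_mul, smul_mul_smul_comm, hM, smul_zero, add_smul]
  simp only [one_mul, mul_one, add_zero]
  abel

theorem List.prod_map_reverse_mul_prod_map_eq_one {ι M : Type*} [Monoid M] (l : List ι)
    (f g : ι → M) (h : ∀ i ∈ l, f i * g i = 1) :
    (l.reverse.map f).prod * (l.map g).prod = 1 := by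
  rw [List.map_reverse]
  induction l with
  | nil => simp
  | cons a l ih =>
    simp only [List.map_cons, List.reverse_cons, List.prod_append, List.prod_cons, List.prod_nil,
      mul_one, List.mem_cons, forall_eq_or_imp] at h ⊢
    rw [mul_assoc, ← mul_assoc (f a), h.1, one_mul, ih h.2]

theorem Submonoid.units_mul_mul_inv_mem_closure {M : Type*} [Monoid M] {s : Set M} (u : Mˣ)
    (hs : ∀ a ∈ s, ↑u * a * ↑u⁻¹ ∈ closure s) {a : M} (ha : a ∈ closure s) :
    ↑u * a * ↑u⁻¹ ∈ closure s := by
  induction ha using closure_induction with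
  | mem a ha => exact hs a ha
  | one => simp [one_mem]
  | mul a b _ _ ha hb => simpa [mul_assoc] using mul_mem ha hb

theorem Submonoid.exists_prod_map_finRange_reverse_of_mem_closure {M : Type*} [Monoid M]
    {s : Set M} {x : M} (hx : x ∈ closure s) :
    ∃ (r : ℕ) (g : Fin r → M), (∀ i, g i ∈ s) ∧
      x = ((List.finRange r).reverse.map g).prod := by
  obtain ⟨l, hl, rfl⟩ := exists_list_of_mem_closure hx
  refine ⟨l.reverse.length, l.reverse.get,
    fun i => hl _ (List.mem_reverse.mp (List.get_mem _ i)), ?_⟩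
  rw [List.map_reverse, List.map_get_finRange, List.reverse_reverse]

theorem Submonoid.one_add_sum_mem {A ι : Type*} [Ring A] (S : Submonoid A) (s : Finset ι)
    {M : ι → A} (hM : ∀ i j, M i * M j = 0) (hS : ∀ i, 1 + M i ∈ S) :
    1 + ∑ i ∈ s, M i ∈ S := by
  classical
  induction s using Finset.induction_on with
  | empty => simp
  | insert i s hi ih =>
    have hprod : (1 + M i) * (1 + ∑ j ∈ s, M j) = 1 + ∑ j ∈ insert i s, M j := by
      simp [Finset.sum_insert hi, mul_add, add_mul, Finset.mul_sum, hM, add_assoc]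
    exact hprod ▸ mul_mem (hS i) ih

theorem Polynomial.coeff_prod_sum_of_natDegree_le {R ι : Type*} [CommSemiring R] (s : Finset ι)
    (f : ι → R[X]) (d : ι → ℕ) (h : ∀ i ∈ s, (f i).natDegree ≤ d i) :
    (∏ i ∈ s, f i).coeff (∑ i ∈ s, d i) = ∏ i ∈ s, (f i).coeff (d i) := by
  classical
  induction s using Finset.induction_on with
  | empty => simp
  | insert a s ha ih =>
    simp only [Finset.mem_insert, forall_eq_or_imp] at h
    rw [Finset.prod_insert ha, Finset.sum_insert ha, Finset.prod_insert ha,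
      coeff_mul_add_eq_of_natDegree_le h.1
        ((natDegree_prod_le s f).trans (Finset.sum_le_sum h.2)), ih h.2]

namespace Matrix

section

variable {R : Type*} [CommRing R] {n : Type*}

theorem map_C_smul {m : Type*} (a : R) (N : Matrix m n R) : (a • N).map C = C a • N.map C :=
  Matrix.map_smulₛₗ _ _ _ (fun _ => by simp) N

theorem map_C_mul_self_eq_zero [Fintype n] {N : Matrix n n R} (hN : N * N = 0) :
    N.map C * N.map C = 0 := by
  rw [← Matrix.map_mul, hN, Matrix.map_zero _ (map_zero C)]

variable [DecidableEq n]

noncomputable def primitiveFactor (N : Matrix n n R) (k : ℕ) : Matrix n n R[X] :=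
  1 - N.map C + (X : R[X]) ^ k • N.map C

theorem primitiveFactor_eq (N : Matrix n n R) (k : ℕ) :
    primitiveFactor N k = 1 + ((X : R[X]) ^ k - 1) • N.map C := by
  rw [primitiveFactor, sub_smul, one_smul]
  abel

variable [Fintype n]

theorem primitiveFactor_mul_eq_one {N : Matrix n n R} (hN : N * N = 0) (k : ℕ) :
    primitiveFactor N k * (1 + N.map C - (X : R[X]) ^ k • N.map C) = 1 := by
  have hinv : 1 + N.map C - (X : R[X]) ^ k • N.map C
      = 1 + (-((X : R[X]) ^ k - 1)) • N.map C := by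
    rw [neg_sub, sub_smul, one_smul, add_sub_assoc]
  rw [primitiveFactor_eq, hinv, one_add_smul_mul_one_add_smul (map_C_mul_self_eq_zero hN),
    add_neg_cancel, zero_smul, add_zero]

def primitiveFactors : Set (Matrix n n R[X]) :=
  {A | ∃ (N : Matrix n n R) (k : ℕ), N * N = 0 ∧ 0 < k ∧ A = primitiveFactor N k}

theorem one_add_smul_sub_C_eval_one_mem {N : Matrix n n R} (hN : N * N = 0) (f : R[X]) :
    1 + (f - C (f.eval 1)) • N.map C ∈ Submonoid.closure primitiveFactors := by
  induction f using Polynomial.induction_on' with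
  | add p q hp hq =>
    have hsplit : p + q - C ((p + q).eval 1) = (p - C (p.eval 1)) + (q - C (q.eval 1)) := by
      rw [eval_add, C_add]; ring
    rw [hsplit, ← one_add_smul_mul_one_add_smul (map_C_mul_self_eq_zero hN)]
    exact mul_mem hp hq
  | monomial k a =>
    rcases Nat.eq_zero_or_pos k with rfl | hk
    · simp [one_mem]
    · refine Submonoid.subset_closure ⟨a • N, k, ?_, hk, ?_⟩
      · rw [Matrix.smul_mul, Matrix.mul_smul, hN, smul_zero, smul_zero]
      · rw [primitiveFactor_eq, map_C_smul, smul_smul, eval_monomial, one_pow, mul_one,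
          ← C_mul_X_pow_eq_monomial, ← mul_sub_one, mul_comm]

theorem map_C_mul_primitiveFactor_mul (P : (Matrix n n R)ˣ) (N : Matrix n n R) (k : ℕ) :
    (P : Matrix n n R).map C * primitiveFactor N k * (↑P⁻¹ : Matrix n n R).map C
      = primitiveFactor ((P : Matrix n n R) * N * (↑P⁻¹ : Matrix n n R)) k := by
  simp only [primitiveFactor_eq, mul_add, add_mul, mul_one, Matrix.mul_smul, Matrix.smul_mul,
    ← Matrix.map_mul, P.mul_inv, Matrix.map_one _ (map_zero C) (map_one C)]

theorem conj_mem_closure_primitiveFactors (P : (Matrix n n R)ˣ) {A : Matrix n n R[X]}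
    (hA : A ∈ Submonoid.closure primitiveFactors) :
    (P : Matrix n n R).map C * A * (↑P⁻¹ : Matrix n n R).map C
      ∈ Submonoid.closure primitiveFactors := by
  let φ : Matrix n n R →+* Matrix n n R[X] := C.mapMatrix
  refine Submonoid.units_mul_mul_inv_mem_closure (Units.map φ.toMonoidHom P) ?_ hA
  rintro _ ⟨N, k, hN, hk, rfl⟩
  refine Submonoid.subset_closure ⟨_, k, ?_, hk, map_C_mul_primitiveFactor_mul P N k⟩
  simp only [mul_assoc, P.inv_mul_cancel_left]
  rw [← mul_assoc N, hN, zero_mul, mul_zero]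

theorem map_eval_one_of_mem_closure_primitiveFactors {A : Matrix n n R[X]}
    (hA : A ∈ Submonoid.closure primitiveFactors) : A.map (eval 1) = 1 := by
  let ψ : Matrix n n R[X] →+* Matrix n n R := (evalRingHom 1).mapMatrix
  refine (Submonoid.closure_le (S := MonoidHom.mker ψ.toMonoidHom)).mpr ?_ hA
  rintro _ ⟨N, k, -, -, rfl⟩
  ext i j
  by_cases hij : i = j <;> simp [ψ, primitiveFactor, Matrix.one_apply, hij]

def transvectionsAndConstantUnits : Set (Matrix n n R[X]) :=
  {A | (∃ i j f, i ≠ j ∧ A = transvection i j f) ∨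
    ∃ P : (Matrix n n R)ˣ, A = (P : Matrix n n R).map C}

theorem one_add_smul_map_C_eq_mul {N : Matrix n n R} (hN : N * N = 0) (f : R[X]) :
    1 + f • N.map C
      = (1 + (f - C (f.eval 1)) • N.map C) * (1 + f.eval 1 • N).map C := by
  rw [Matrix.map_add _ (map_add C), Matrix.map_one _ (map_zero C) (map_one C), map_C_smul,
    one_add_smul_mul_one_add_smul (map_C_mul_self_eq_zero hN), sub_add_cancel]

theorem exists_mem_closure_primitiveFactors_mul_map_C {A : Matrix n n R[X]}
    (hA : A ∈ Submonoid.closure transvectionsAndConstantUnits) :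
    ∃ G ∈ Submonoid.closure primitiveFactors, ∃ P : (Matrix n n R)ˣ,
      A = G * (P : Matrix n n R).map C := by
  induction hA using Submonoid.closure_induction with
  | mem A hA =>
    rcases hA with ⟨i, j, f, hij, rfl⟩ | ⟨P, rfl⟩
    · set N : Matrix n n R := single i j 1
      have hN : N * N = 0 := single_mul_single_of_ne _ _ _ _ hij.symm _
      have hunit : IsUnit (1 + f.eval 1 • N) :=
        IsNilpotent.isUnit_one_add ⟨2, by rw [sq, Matrix.smul_mul, Matrix.mul_smul, hN,
          smul_zero, smul_zero]⟩
      refine ⟨_, one_add_smul_sub_C_eval_one_mem hN f, hunit.unit, ?_⟩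
      rw [IsUnit.unit_spec, ← one_add_smul_map_C_eq_mul hN, transvection, map_single,
        smul_single, map_one C, smul_eq_mul, mul_one]
    · exact ⟨1, one_mem _, P, (one_mul _).symm⟩
  | one => exact ⟨1, one_mem _, 1, by simp⟩
  | mul A B _ _ hA hB =>
    obtain ⟨G, hG, P, rfl⟩ := hA
    obtain ⟨H, hH, Q, rfl⟩ := hB
    refine ⟨G * ((P : Matrix n n R).map C * H * (↑P⁻¹ : Matrix n n R).map C),
      mul_mem hG (conj_mem_closure_primitiveFactors P hH), P * Q, ?_⟩
    simp only [Units.val_mul, Matrix.map_mul, mul_assoc]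
    rw [← mul_assoc ((↑P⁻¹ : Matrix n n R).map C), ← Matrix.map_mul, P.inv_mul,
      Matrix.map_one _ (map_zero C) (map_one C), one_mul]

theorem mem_closure_primitiveFactors_of_map_eval_one {A : Matrix n n R[X]}
    (hA : A ∈ Submonoid.closure transvectionsAndConstantUnits) (h1 : A.map (eval 1) = 1) :
    A ∈ Submonoid.closure primitiveFactors := by
  obtain ⟨G, hG, P, rfl⟩ := exists_mem_closure_primitiveFactors_mul_map_C hA
  have hP : (P : Matrix n n R) = 1 := by
    have hmap : ((P : Matrix n n R).map C).map (eval 1) = P := by ext; simp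
    rwa [← Polynomial.coe_evalRingHom, Matrix.map_mul, Polynomial.coe_evalRingHom,
      map_eval_one_of_mem_closure_primitiveFactors hG, one_mul, hmap] at h1
  rwa [hP, Matrix.map_one _ (map_zero C) (map_one C), mul_one]

theorem vecMulVec_single_eq_sum (i : n) (b : n → R) :
    vecMulVec (Pi.single i 1) b = ∑ j, single i j (b j) := by
  ext k l
  rcases eq_or_ne k i with rfl | hk
  · simp [vecMulVec_apply, Matrix.sum_apply, single_apply]
  · simp [vecMulVec_apply, Matrix.sum_apply, hk, hk.symm]

theorem one_add_vecMulVec_single_mem_closure {i : n} {b : n → R[X]} (hb : b i = 0) :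
    1 + vecMulVec (Pi.single i 1) b ∈ Submonoid.closure transvectionsAndConstantUnits := by
  rw [vecMulVec_single_eq_sum]
  refine Submonoid.one_add_sum_mem _ _ (fun j k => ?_) (fun j => ?_)
  · rcases eq_or_ne j i with rfl | hj
    · rw [hb, single_zero, zero_mul]
    · exact single_mul_single_of_ne _ _ _ _ hj _
  · rcases eq_or_ne j i with rfl | hj
    · rw [hb, single_zero, add_zero]
      exact one_mem _
    · exact Submonoid.subset_closure (Or.inl ⟨i, j, b j, hj.symm, rfl⟩)

theorem updateRow_vecMul_eq_mul (A : Matrix n n R) (i : n) (a : n → R) :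
    A.updateRow i (a ᵥ* A) = (1 + vecMulVec (Pi.single i 1) (a - Pi.single i 1)) * A := by
  ext k j
  rcases eq_or_ne k i with rfl | hk
  · simp [add_mul, vecMulVec_mul, vecMulVec_apply, sub_vecMul, single_vecMul]
  · simp [add_mul, vecMulVec_mul, vecMulVec_apply, hk]

theorem exists_mem_closure_eq_mul_updateRow (A : Matrix n n R[X]) {i : n} {a : n → R[X]}
    (ha : a i = 1) :
    ∃ T ∈ Submonoid.closure transvectionsAndConstantUnits,
      A = T * A.updateRow i (a ᵥ* A) := by
  set N := vecMulVec (Pi.single i (1 : R[X])) (a - Pi.single i 1)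
  have hN : N * N = 0 := by
    simp [N, vecMulVec_mul_vecMulVec, dotProduct_single, ha]
  refine ⟨1 + vecMulVec (Pi.single i 1) (-(a - Pi.single i 1)),
    one_add_vecMulVec_single_mem_closure (by simp [ha]), ?_⟩
  rw [updateRow_vecMul_eq_mul, vecMulVec_neg, ← sub_eq_add_neg, ← mul_assoc, mul_add, mul_one,
    sub_mul, one_mul, hN, sub_zero, sub_add_cancel, one_mul]

end

section

variable {R : Type*} [CommRing R] {m n : Type*} [Fintype n]

noncomputable def rowDegree (A : Matrix m n R[X]) (i : m) : ℕ :=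
  Finset.univ.sup fun j => (A i j).natDegree

noncomputable def degreeSum [Fintype m] (A : Matrix m n R[X]) : ℕ :=
  ∑ i, A.rowDegree i

noncomputable def leadingRowCoeff (A : Matrix m n R[X]) : Matrix m n R :=
  of fun i j => (A i j).coeff (A.rowDegree i)

theorem natDegree_le_rowDegree (A : Matrix m n R[X]) (i : m) (j : n) :
    (A i j).natDegree ≤ A.rowDegree i :=
  Finset.le_sup (f := fun j => (A i j).natDegree) (Finset.mem_univ j)

theorem coeff_det_degreeSum [DecidableEq n] (A : Matrix n n R[X]) :
    A.det.coeff A.degreeSum = A.leadingRowCoeff.det := by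
  rw [det_apply', det_apply', finsetSum_coeff]
  refine Finset.sum_congr rfl fun σ _ => ?_
  rw [← C_eq_intCast, coeff_C_mul, degreeSum, ← Equiv.sum_comp σ,
    coeff_prod_sum_of_natDegree_le _ _ _ fun i _ => natDegree_le_rowDegree A (σ i) i]
  rfl

theorem rowDegree_lt_of_degree_lt {A : Matrix m n R[X]} {i : m} {d : ℕ} (hA : A i ≠ 0)
    (h : ∀ j, (A i j).degree < d) : A.rowDegree i < d := by
  obtain ⟨j₀, hj₀⟩ := Function.ne_iff.mp hA
  have hd : 0 < d := (Nat.zero_le _).trans_lt ((natDegree_lt_iff_degree_lt hj₀).mpr (h j₀))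
  refine (Finset.sup_lt_iff hd).mpr fun j _ => ?_
  rcases eq_or_ne (A i j) 0 with hj | hj
  · rwa [hj, natDegree_zero]
  · exact (natDegree_lt_iff_degree_lt hj).mpr (h j)

theorem degreeSum_updateRow_lt [Fintype m] [DecidableEq m] {A : Matrix m n R[X]} {i : m}
    {w : n → R[X]} (hw : w ≠ 0) (h : ∀ j, (w j).degree < A.rowDegree i) :
    (A.updateRow i w).degreeSum < A.degreeSum := by
  have hi : (A.updateRow i w).rowDegree i < A.rowDegree i :=
    rowDegree_lt_of_degree_lt (by rwa [updateRow_self]) (by simpa using h)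
  refine Finset.sum_lt_sum (fun k _ => ?_) ⟨i, Finset.mem_univ i, hi⟩
  rcases eq_or_ne k i with rfl | hk
  · exact hi.le
  · simp [rowDegree, updateRow_ne hk]

theorem det_leadingRowCoeff_eq_zero [IsDomain R] [DecidableEq n] {A : Matrix n n R[X]}
    (hA : IsUnit A.det) (hdeg : A.degreeSum ≠ 0) : A.leadingRowCoeff.det = 0 := by
  obtain ⟨r, -, hr⟩ := Polynomial.isUnit_iff.mp hA
  rw [← coeff_det_degreeSum, ← hr, coeff_C, if_neg hdeg]

/- The truncated exponent `rowDegree i - rowDegree k` only misbehaves where `v k = 0`, so there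
the term vanishes anyway. -/
theorem degree_vecMul_lt {A : Matrix n n R[X]} {v : n → R} {i : n}
    (hv : v ᵥ* A.leadingRowCoeff = 0)
    (hmax : ∀ k, v k ≠ 0 → A.rowDegree k ≤ A.rowDegree i) (j : n) :
    (((fun k => C (v k) * X ^ (A.rowDegree i - A.rowDegree k)) ᵥ* A) j).degree
      < A.rowDegree i := by
  set d := A.rowDegree
  rw [degree_lt_iff_coeff_zero]
  intro e he
  have hterm : ∀ k, (C (v k) * X ^ (d i - d k) * A k j).coeff e
      = v k * (A k j).coeff (e - d i + d k) := by
    intro k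
    rcases eq_or_ne (v k) 0 with hk | hk
    · simp [hk]
    · rw [mul_assoc, coeff_C_mul, coeff_X_pow_mul', if_pos (by omega),
        show e - (d i - d k) = e - d i + d k by have := hmax k hk; omega]
  simp only [vecMul, dotProduct, finsetSum_coeff, hterm]
  rcases he.eq_or_lt with rfl | hlt
  · simpa [vecMul, dotProduct, leadingRowCoeff] using congrFun hv j
  · refine Finset.sum_eq_zero fun k _ => ?_
    rw [coeff_eq_zero_of_natDegree_lt, mul_zero]
    have hk : (A k j).natDegree ≤ d k := natDegree_le_rowDegree A k j
    omega

end

theorem exists_vecMul_eq_zero_max_of_det_eq_zero {K n : Type*} [Field K] [Fintype n]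
    [DecidableEq n] {M : Matrix n n K} (hM : M.det = 0) (d : n → ℕ) :
    ∃ v : n → K, ∃ i, v ᵥ* M = 0 ∧ v i = 1 ∧ ∀ k, v k ≠ 0 → d k ≤ d i := by
  classical
  obtain ⟨v, hv, hvM⟩ := exists_vecMul_eq_zero_iff.mpr hM
  obtain ⟨i, hi, hmax⟩ := Finset.exists_max_image {k | v k ≠ 0} d
    (Finset.filter_nonempty_iff.mpr (by simpa [funext_iff] using hv))
  have hvi : v i ≠ 0 := (Finset.mem_filter.mp hi).2
  refine ⟨(v i)⁻¹ • v, i, by rw [smul_vecMul, hvM, smul_zero], inv_mul_cancel₀ hvi,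
    fun k hk => hmax k (Finset.mem_filter.mpr ⟨Finset.mem_univ k, ?_⟩)⟩
  exact right_ne_zero_of_mul hk

variable {F : Type*} [Field F] {n : Type*} [Fintype n] [DecidableEq n]

theorem exists_eq_mul_degreeSum_lt {A : Matrix n n F[X]} (hA : IsUnit A)
    (hdeg : A.degreeSum ≠ 0) :
    ∃ T ∈ Submonoid.closure transvectionsAndConstantUnits, ∃ B : Matrix n n F[X],
      IsUnit B ∧ B.degreeSum < A.degreeSum ∧ A = T * B := by
  rw [isUnit_iff_isUnit_det] at hA
  obtain ⟨v, i, hv, hvi, hmax⟩ :=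
    exists_vecMul_eq_zero_max_of_det_eq_zero (det_leadingRowCoeff_eq_zero hA hdeg) A.rowDegree
  set a : n → F[X] := fun k => C (v k) * X ^ (A.rowDegree i - A.rowDegree k)
  have ha : a i = 1 := by simp [a, hvi]
  obtain ⟨T, hT, hAT⟩ := exists_mem_closure_eq_mul_updateRow A ha
  have hdet : (A.updateRow i (a ᵥ* A)).det = A.det := by
    have hsum : a ᵥ* A = ∑ k, a k • A k := by ext j; simp [vecMul, dotProduct]
    rw [hsum, det_updateRow_sum, ha, one_smul]
  have hrow : a ᵥ* A ≠ 0 := fun h0 =>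
    hA.ne_zero (hdet ▸ det_eq_zero_of_row_eq_zero i (by simp [h0]))
  exact ⟨T, hT, _, (isUnit_iff_isUnit_det _).mpr (hdet ▸ hA),
    degreeSum_updateRow_lt hrow (degree_vecMul_lt hv hmax), hAT⟩

theorem mem_closure_transvectionsAndConstantUnits {A : Matrix n n F[X]} (hA : IsUnit A) :
    A ∈ Submonoid.closure transvectionsAndConstantUnits := by
  by_cases hdeg : A.degreeSum = 0
  · have hconst : A = (A.map (eval 0)).map C := by
      refine Matrix.ext fun i j => ?_
      have hij : (A i j).natDegree = 0 := by
        have hle := natDegree_le_rowDegree A i j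
        have hrow := (Finset.sum_eq_zero_iff.mp hdeg) i (Finset.mem_univ i)
        omega
      rw [map_apply, map_apply, ← coeff_zero_eq_eval_zero]
      exact eq_C_of_natDegree_eq_zero hij
    have hunit : IsUnit (A.map (eval 0)) := hA.map (evalRingHom 0).mapMatrix
    exact Submonoid.subset_closure (Or.inr ⟨hunit.unit, hconst⟩)
  · obtain ⟨T, hT, B, hB, hlt, rfl⟩ := exists_eq_mul_degreeSum_lt hA hdeg
    exact mul_mem hT (mem_closure_transvectionsAndConstantUnits hB)
termination_by A.degreeSum

end Matrix

theorem pseudoidentity_factorization_general {F : Type*} [Field F] {m : ℕ}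
    (C E : Matrix (Fin m) (Fin m) F[X])
    (hCE : C * E = 1)
    (hC1 : C.map (Polynomial.eval (1 : F)) = 1) :
    ∃ (r : ℕ) (N : Fin r → Matrix (Fin m) (Fin m) F) (k : Fin r → ℕ),
      (∀ i, N i ^ 2 = 0) ∧ (∀ i, 1 ≤ k i) ∧
      C = (((List.finRange r).reverse).map
        (fun i => (1 : Matrix (Fin m) (Fin m) F[X]) - (N i).map Polynomial.C
          + (X : F[X]) ^ (k i) • (N i).map Polynomial.C)).prod ∧
      E = ((List.finRange r).map
        (fun i => (1 : Matrix (Fin m) (Fin m) F[X]) + (N i).map Polynomial.C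
          - (X : F[X]) ^ (k i) • (N i).map Polynomial.C)).prod := by
  have hC : IsUnit C :=
    (Matrix.isUnit_iff_isUnit_det C).mpr (Matrix.isUnit_det_of_right_inverse hCE)
  obtain ⟨r, g, hg, rfl⟩ := Submonoid.exists_prod_map_finRange_reverse_of_mem_closure
    (Matrix.mem_closure_primitiveFactors_of_map_eval_one
      (Matrix.mem_closure_transvectionsAndConstantUnits hC) hC1)
  choose N k hN hk hg using hg
  obtain rfl : g = fun i => Matrix.primitiveFactor (N i) (k i) := funext hg
  refine ⟨r, N, k, fun i => (sq (N i)).trans (hN i), hk, rfl, ?_⟩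
  exact left_inv_eq_right_inv (mul_eq_one_comm.mp hCE)
    (List.prod_map_reverse_mul_prod_map_eq_one _ _ _ fun i _ =>
      Matrix.primitiveFactor_mul_eq_one (hN i) (k i))

/-- Necessity direction of Theorem 3.1, the main result of the paper: every
pseudoidentity matrix pair of rank `m ≥ 2` factors completely into primitive factors
built from square-zero nilpotent matrices. -/
theorem pseudoidentity_factorization {F : Type*} [Field F] {m : ℕ} (hm : 2 ≤ m)
    (C E : Matrix (Fin m) (Fin m) F[X])
    (hCE : C * E = 1)
    (hC1 : C.map (Polynomial.eval (1 : F)) = 1) :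
    ∃ (r : ℕ) (N : Fin r → Matrix (Fin m) (Fin m) F) (k : Fin r → ℕ),
      (∀ i, N i ^ 2 = 0) ∧ (∀ i, 1 ≤ k i) ∧
      C = (((List.finRange r).reverse).map
        (fun i => (1 : Matrix (Fin m) (Fin m) F[X]) - (N i).map Polynomial.C
          + (X : F[X]) ^ (k i) • (N i).map Polynomial.C)).prod ∧
      E = ((List.finRange r).map
        (fun i => (1 : Matrix (Fin m) (Fin m) F[X]) + (N i).map Polynomial.C
          - (X : F[X]) ^ (k i) • (N i).map Polynomial.C)).prod :=
  pseudoidentity_factorization_general C E hCE hC1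
end

section
/- Let F be a field, m ≥ 2, and let i ≠ j be indices in {0, …, m−1}. Let f ∈ F[X] have degree n, with coefficients a_0, a_1, …, a_n. Then, in m×m matrices over F[X]: I_m + f·E_{ij} = (∏_{k=1}^{n} (I_m + (a_k·X^k − a_k)·E_{ij})) · (I_m + f(1)·E_{ij}), where E_{ij} is the matrix unit with 1 in position (i,j) and 0 elsewhere (regarded over F[X]), f(1) ∈ F is the evaluation of f at 1, and the product may be taken in any order since all factors commute. -/
open Polynomial

/-! Since `E_{ij}² = 0` for `i ≠ j`, `g ↦ I + g·E_{ij}` turns sums into products. So the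
factorization is the splitting `f = ∑_{k=1}^{n} (a_k X^k - a_k) + f(1)`, which holds because
`f(1) = ∑_k a_k`. -/

theorem Polynomial.eq_sum_range_C_mul_X_pow_sub_C_add_C_eval_one {R : Type*} [Ring R] (f : R[X]) :
    f = ∑ k ∈ Finset.range f.natDegree, (C (f.coeff (k + 1)) * X ^ (k + 1) - C (f.coeff (k + 1)))
      + C (f.eval 1) := by
  conv_lhs => rw [f.as_sum_range_C_mul_X_pow]
  rw [eval_eq_sum_range, Finset.sum_range_succ', Finset.sum_range_succ']
  simp only [one_pow, mul_one, pow_zero, map_add, map_sum, Finset.sum_sub_distrib]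
  abel

theorem Matrix.list_prod_map_transvection {ι R : Type*} [Fintype ι] [DecidableEq ι] [CommRing R]
    {i j : ι} (hij : i ≠ j) (l : List R) :
    (l.map (transvection i j)).prod = transvection i j l.sum := by
  induction l with
  | nil => simp
  | cons c l ih =>
    rw [List.map_cons, List.prod_cons, ih, transvection_mul_transvection_same _ _ hij,
      List.sum_cons]

theorem List.sum_map_range {M : Type*} [AddCommMonoid M] (g : ℕ → M) (n : ℕ) :
    ((List.range n).map g).sum = ∑ k ∈ Finset.range n, g k := by
  simp [Finset.sum_eq_multiset_sum, Multiset.range]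

theorem transvection_factorization_general {F : Type*} [Field F] {m : ℕ}
    (i j : Fin m) (hij : i ≠ j) (f : F[X]) (n : ℕ) (hn : f.natDegree = n) :
    (1 : Matrix (Fin m) (Fin m) F[X]) + Matrix.single i j f =
      (((List.range n).map (fun k =>
        (1 : Matrix (Fin m) (Fin m) F[X]) + Matrix.single i j
          (Polynomial.C (f.coeff (k + 1)) * (X : F[X]) ^ (k + 1)
            - Polynomial.C (f.coeff (k + 1))))).prod) *
      ((1 : Matrix (Fin m) (Fin m) F[X])
        + Matrix.single i j (Polynomial.C (f.eval 1))) := by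
  subst hn
  set g : ℕ → F[X] := fun k => C (f.coeff (k + 1)) * X ^ (k + 1) - C (f.coeff (k + 1))
  calc 1 + Matrix.single i j f = Matrix.transvection i j f := rfl
    _ = Matrix.transvection i j ((List.range f.natDegree).map g).sum *
          Matrix.transvection i j (C (f.eval 1)) := by
      rw [Matrix.transvection_mul_transvection_same _ _ hij, List.sum_map_range,
        ← f.eq_sum_range_C_mul_X_pow_sub_C_add_C_eval_one]
    _ = _ := by
      rw [← Matrix.list_prod_map_transvection hij, List.map_map]
      rfl

/-- The factorization (3.16) of an elementary (transvection) matrix: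
`I_m + f·E_{ij} = (∏_{k=1}^{n} (I_m + (a_k·X^k − a_k)·E_{ij})) · (I_m + f(1)·E_{ij})`. -/
theorem transvection_factorization {F : Type*} [Field F] {m : ℕ} (hm : 2 ≤ m)
    (i j : Fin m) (hij : i ≠ j) (f : F[X]) (n : ℕ) (hn : f.natDegree = n) :
    (1 : Matrix (Fin m) (Fin m) F[X]) + Matrix.single i j f =
      (((List.range n).map (fun k =>
        (1 : Matrix (Fin m) (Fin m) F[X]) + Matrix.single i j
          (Polynomial.C (f.coeff (k + 1)) * (X : F[X]) ^ (k + 1)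
            - Polynomial.C (f.coeff (k + 1))))).prod) *
      ((1 : Matrix (Fin m) (Fin m) F[X])
        + Matrix.single i j (Polynomial.C (f.eval 1))) :=
  transvection_factorization_general i j hij f n hn
end

section
/- Let F be a field and let b ∈ F[X] satisfy b(1) = 0, with n = deg b and coefficients b_1, …, b_n (so b = Σ_{i=1}^{n} b_i·X^i + b_0 with Σ_{i=0}^{n} b_i = 0). Then, in 2×2 matrices over F[X]: [[1, b], [0, 1]] = ∏_{i=1}^{n} (I₂ − b_i·E₁₂ + b_i·E₁₂·X^i), where E₁₂ is the 2×2 matrix unit with 1 in position (1,2) and 0 elsewhere (regarded over F[X]), and the product may be taken in any order since all factors commute. -/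
/-!
Each factor `1 - c E₁₂ + c E₁₂ X^i` is the transvection `1 + c (X^i - 1) E₁₂`, and transvections
at a fixed position multiply by adding their parameters. So the product is the transvection with
parameter `∑ bᵢ (X^i - 1) = b - b(1)`, which is `b` because `b(1) = 0`.
-/

open Polynomial Matrix

theorem Polynomial.eq_C_eval_one_add_sum_range {R : Type*} [CommRing R] (b : R[X]) {n : ℕ}
    (hn : b.natDegree ≤ n) :
    b = C (b.eval 1) + ∑ i ∈ Finset.range n, C (b.coeff (i + 1)) * (X ^ (i + 1) - 1) := by
  have hlt : b.natDegree < n + 1 := Nat.lt_succ_of_le hn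
  have hsum : ∑ i ∈ Finset.range (n + 1), C (b.coeff i) * (X ^ i - 1) = b - C (b.eval 1) := by
    simp only [mul_sub, mul_one, Finset.sum_sub_distrib, ← b.as_sum_range_C_mul_X_pow' hlt,
      b.eval_eq_sum_range' hlt, one_pow, map_sum]
  rw [Finset.sum_range_succ', pow_zero, sub_self, mul_zero, add_zero] at hsum
  rw [hsum, add_sub_cancel]

namespace Matrix

variable {n R : Type*} [DecidableEq n] [CommRing R]

theorem one_sub_single_add_single_mul_scalar [Fintype n] (i j : n) (c p : R) :
    1 - single i j c + single i j c * scalar n p = transvection i j (c * (p - 1)) := by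
  rw [transvection, scalar_apply, ← smul_one_eq_diagonal, Matrix.mul_smul, mul_one, smul_single,
    smul_eq_mul, mul_sub, mul_one, mul_comm, sub_eq_add_neg (c * p), single_add, ← single_neg]
  abel

theorem list_prod_map_transvection_s12 [Fintype n] {i j : n} (hij : i ≠ j) {ι : Type*}
    (l : List ι) (f : ι → R) :
    (l.map fun k => transvection i j (f k)).prod = transvection i j (l.map f).sum := by
  induction l with
  | nil => simp
  | cons k l ih =>
    rw [List.map_cons, List.prod_cons, ih, transvection_mul_transvection_same _ _ hij,
      List.map_cons, List.sum_cons]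

theorem transvection_fin_two_zero_one (b : R) : transvection (0 : Fin 2) 1 b = !![1, b; 0, 1] := by
  ext i j
  fin_cases i <;> fin_cases j <;> simp [transvection]

end Matrix

/-- The explicit complete factorization in the case `c = 0` of the rank-2 analysis in
Section 4: if `b(1) = 0` then `[[1, b], [0, 1]]` is the product of the primitive
factors `I₂ − b_i·E₁₂ + b_i·E₁₂·X^i` for `i = 1, …, n = deg b`. -/
theorem unipotent_factorization {F : Type*} [Field F] (b : F[X]) (hb : b.eval 1 = 0)
    (n : ℕ) (hn : b.natDegree = n) :
    (!![1, b; 0, 1] : Matrix (Fin 2) (Fin 2) F[X]) =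
      ((List.range n).map (fun i =>
        (1 : Matrix (Fin 2) (Fin 2) F[X])
          - Matrix.single 0 1 (Polynomial.C (b.coeff (i + 1)))
          + Matrix.single 0 1 (Polynomial.C (b.coeff (i + 1)))
              * Matrix.scalar (Fin 2) ((X : F[X]) ^ (i + 1)))).prod := by
  have hb_sum : b = ∑ i ∈ Finset.range n, C (b.coeff (i + 1)) * (X ^ (i + 1) - 1) := by
    simpa [hb] using b.eq_C_eval_one_add_sum_range hn.le
  simp only [one_sub_single_add_single_mul_scalar]
  rw [list_prod_map_transvection_s12 zero_ne_one, ← transvection_fin_two_zero_one]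
  conv_lhs => rw [hb_sum]
  -- `Finset.range n` is built from `List.range n`, so the two sums agree definitionally.
  rfl
end

section
/- Over ℚ, let N = [[1, −1], [1, −1]] (a 2×2 matrix) and let N̂ be its image in 2×2 matrices over ℚ[X] via the constant embedding. Then N² = 0, and (I₂ − N̂ + N̂·X)·(I₂ − N̂ + N̂·X²) = [[−1 + X + X², 2 − X − X²], [−2 + X + X², 3 − X − X²]]. In particular, the product on the left, whose exponents satisfy k₁ + k₂ = 1 + 2 = 3, equals a matrix each of whose entries has degree 2, so the degrees of the primitive factors do not add up to the degree of the product. -/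
open Polynomial

/-- Remark 2.3 / equation (3.17): the pseudoidentity matrix `C` of the counterexample
(2.14) factors as `(I₂ − N + N·X)·(I₂ − N + N·X²)` with `N = [[1, −1], [1, −1]]`
square-zero; the factor exponents sum to `3` while every entry of the product has
degree `2`, so the degrees of the factors do not add up. -/
theorem remark23_factorization :
    let N : Matrix (Fin 2) (Fin 2) ℚ := !![1, -1; 1, -1]
    let Nh : Matrix (Fin 2) (Fin 2) ℚ[X] := N.map Polynomial.C
    let M : Matrix (Fin 2) (Fin 2) ℚ[X] :=
      !![-1 + X + X ^ 2, 2 - X - X ^ 2; -2 + X + X ^ 2, 3 - X - X ^ 2]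
    N ^ 2 = 0 ∧
    (1 - Nh + (X : ℚ[X]) • Nh) * (1 - Nh + ((X : ℚ[X]) ^ 2) • Nh) = M ∧
    (∀ p q : Fin 2, (M p q).degree = 2) := by
  intro N Nh M
  refine ⟨?_, ?_, ?_⟩
  · rw [pow_two]; ext i j; fin_cases i <;> fin_cases j <;>
      simp [N, Matrix.mul_apply, Fin.sum_univ_succ]
  · refine Matrix.ext fun i j => ?_
    fin_cases i <;> fin_cases j <;>
      · simp [Nh, N, M, Matrix.mul_apply, Fin.sum_univ_succ, Matrix.one_apply]
        ring
  · intro p q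
    have h2 : ∀ a : ℚ, a ≠ 0 → ((C a + X + X ^ 2 : ℚ[X])).degree = 2 := by
      intro a _
      compute_degree!
    fin_cases p <;> fin_cases q <;> simp [M]
    · have := h2 (-1) (by norm_num); simpa using this
    · have : (2 - X - X^2 : ℚ[X]) = -(C (-2) + X + X^2) := by
        simp [map_ofNat]; ring
      rw [this, degree_neg]; simpa using h2 (-2) (by norm_num)
    · have : (-2 + X + X^2 : ℚ[X]) = C (-2) + X + X^2 := by simp [map_ofNat]
      rw [this]; exact h2 (-2) (by norm_num)
    · have : (3 - X - X^2 : ℚ[X]) = -(C (-3) + X + X^2) := by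
        simp [map_ofNat]; ring
      rw [this, degree_neg]; simpa using h2 (-3) (by norm_num)
end
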